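/- Let {(u_α, b_α)}_{α∈𝒜} be a finite family with u_α ∈ ℝⁿ and b_α < 0 for every α, defining halfspaces H_α⁺ = {x : ⟨x,u_α⟩ ≥ b_α}, H_α⁻ = {x : ⟨x,u_α⟩ ≤ b_α}, and hyperplanes H_α = {x : ⟨x,u_α⟩ = b_α}. Let J ⊊ 𝒜 be a proper subset and suppose the chamber P_J = (⋂_{α∈J} H_α⁺) ∩ (⋂_{α∉J} H_α⁻) is nonempty and compact. Then 0 ∉ P_J, and for every v ∈ P_J the set S(v) = {s ∈ ℝ : s·v ∈ P_J} is a compact interval [s₀, s₁] with 0 < s₀ ≤ 1 ≤ s₁, and a point s·v with s ∈ S(v) lies in ⋃_{α∈J} H_α if and only if s = s₁. In particular, the line ℝ·v meets P_J ∩ ⋃_{α∈J} H_α in exactly one point. -/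
import Mathlib


/-!
For a finite family of halfspaces `H_α⁺ = {x : ⟨x,u_α⟩ ≥ b_α}` with `b_α < 0`
(so the origin is interior to every positive halfspace), a proper subset
`J ⊊ 𝒜`, and a nonempty compact chamber
`P_J = (⋂_{α∈J} H_α⁺) ∩ (⋂_{α∉J} H_α⁻)`:
the origin does not lie in `P_J`; for every `v ∈ P_J` the set
`S(v) = {s : s·v ∈ P_J}` is a compact interval `[s₀,s₁]` with `0 < s₀ ≤ 1 ≤ s₁`;
a point `s·v` with `s ∈ S(v)` lies on `⋃_{α∈J} H_α` iff `s = s₁`; and the line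
`ℝ·v` meets `P_J ∩ ⋃_{α∈J} H_α` in exactly one point.
-/

open Set RealInnerProductSpace

variable {n : ℕ} {A : Type*}

/-- The chamber `P_J = (⋂_{α ∈ J} H_α⁺) ∩ (⋂_{α ∉ J} H_α⁻)` in `ℝⁿ`. -/
def chamber (u : A → EuclideanSpace ℝ (Fin n)) (b : A → ℝ) (J : Set A) :
    Set (EuclideanSpace ℝ (Fin n)) :=
  (⋂ α ∈ J, {x | b α ≤ ⟪x, u α⟫}) ∩ (⋂ α ∈ Jᶜ, {x | ⟪x, u α⟫ ≤ b α})

/-- The union of the hyperplanes `H_α` for `α ∈ J`. -/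
def hyperplanes (u : A → EuclideanSpace ℝ (Fin n)) (b : A → ℝ) (J : Set A) :
    Set (EuclideanSpace ℝ (Fin n)) :=
  ⋃ α ∈ J, {x | ⟪x, u α⟫ = b α}

lemma mem_chamber' {u : A → EuclideanSpace ℝ (Fin n)} {b : A → ℝ} {J : Set A}
    {x : EuclideanSpace ℝ (Fin n)} :
    x ∈ chamber u b J ↔ (∀ α ∈ J, b α ≤ ⟪x, u α⟫) ∧ ∀ α ∉ J, ⟪x, u α⟫ ≤ b α := by
  simp [chamber, mem_iInter]

theorem line_meets_positive_walls_once
    [Fintype A] (u : A → EuclideanSpace ℝ (Fin n)) (b : A → ℝ)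
    (hb : ∀ α, b α < 0)
    (J : Set A) (hJ : J ⊂ (univ : Set A))
    (hne : (chamber u b J).Nonempty) (hcpt : IsCompact (chamber u b J)) :
    (0 : EuclideanSpace ℝ (Fin n)) ∉ chamber u b J ∧
    ∀ v ∈ chamber u b J,
      ∃ s₀ s₁ : ℝ, 0 < s₀ ∧ s₀ ≤ 1 ∧ 1 ≤ s₁ ∧
        {s : ℝ | s • v ∈ chamber u b J} = Set.Icc s₀ s₁ ∧
        (∀ s ∈ Set.Icc s₀ s₁, (s • v ∈ hyperplanes u b J ↔ s = s₁)) ∧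
        (∃! x : EuclideanSpace ℝ (Fin n),
          x ∈ chamber u b J ∩ hyperplanes u b J ∧ ∃ s : ℝ, x = s • v) := by
  obtain ⟨β, -, hβ⟩ := exists_of_ssubset hJ
  have h0 : (0 : EuclideanSpace ℝ (Fin n)) ∉ chamber u b J := by
    intro h
    have h2 := (mem_chamber'.mp h).2 β hβ
    rw [inner_zero_left] at h2
    linarith [hb β]
  refine ⟨h0, fun v hv => ?_⟩
  have hvne : v ≠ 0 := fun h => h0 (h ▸ hv)
  set c : A → ℝ := fun α => ⟪v, u α⟫ with hc
  set S : Set ℝ := {s | s • v ∈ chamber u b J} with hSdef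
  have hmemS : ∀ s : ℝ, s ∈ S ↔
      (∀ α ∈ J, b α ≤ s * c α) ∧ ∀ α ∉ J, s * c α ≤ b α := by
    intro s
    simp only [hSdef, mem_setOf_eq, mem_chamber', real_inner_smul_left, hc]
  have h1S : (1 : ℝ) ∈ S := by simpa [hSdef] using hv
  have hSne : S.Nonempty := ⟨1, h1S⟩
  have hSclosed : IsClosed S :=
    hcpt.isClosed.preimage (continuous_id.smul continuous_const)
  obtain ⟨C, hC⟩ := hcpt.isBounded.exists_norm_le
  have hvpos : (0 : ℝ) < ‖v‖ := norm_pos_iff.mpr hvne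
  have hSsub : S ⊆ Icc (-(C / ‖v‖)) (C / ‖v‖) := by
    intro s hs
    have h1 : ‖s • v‖ ≤ C := hC _ hs
    rw [norm_smul] at h1
    have : |s| ≤ C / ‖v‖ := by
      rw [le_div_iff₀ hvpos]; simpa using h1
    exact abs_le.mp this
  have hScpt : IsCompact S := (isCompact_Icc).of_isClosed_subset hSclosed hSsub
  have hSconv : Convex ℝ S := by
    intro s hs t ht a a' ha ha' haa
    rw [hmemS] at hs ht ⊢
    simp only [smul_eq_mul]
    have ha2 : a' = 1 - a := by linarith
    subst ha2
    constructor
    · intro α hα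
      have h1 := hs.1 α hα
      have h2 := ht.1 α hα
      nlinarith [mul_le_mul_of_nonneg_left h1 ha, mul_le_mul_of_nonneg_left h2 ha']
    · intro α hα
      have h1 := hs.2 α hα
      have h2 := ht.2 α hα
      nlinarith [mul_le_mul_of_nonneg_left h1 ha, mul_le_mul_of_nonneg_left h2 ha']
  set s₀ : ℝ := sInf S with hs₀def
  set s₁ : ℝ := sSup S with hs₁def
  have hs₀S : s₀ ∈ S := hScpt.sInf_mem hSne
  have hs₁S : s₁ ∈ S := hScpt.sSup_mem hSne
  have hS_eq : S = Icc s₀ s₁ := by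
    apply Subset.antisymm
    · exact fun x hx => ⟨csInf_le hScpt.bddBelow hx, le_csSup hScpt.bddAbove hx⟩
    · exact hSconv.ordConnected.out hs₀S hs₁S
  have hs₀le1 : s₀ ≤ 1 := csInf_le hScpt.bddBelow h1S
  have h1les₁ : (1 : ℝ) ≤ s₁ := le_csSup hScpt.bddAbove h1S
  have hs₀pos : 0 < s₀ := by
    by_contra h
    push_neg at h
    have h0S : (0 : ℝ) ∈ S := by
      rw [hS_eq]; exact ⟨h, by linarith⟩
    have : (0 : EuclideanSpace ℝ (Fin n)) ∈ chamber u b J := by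
      simpa [hSdef] using h0S
    exact h0 this
  have hs₁pos : 0 < s₁ := by linarith
  have hmemHyp : ∀ s : ℝ, s • v ∈ hyperplanes u b J ↔ ∃ α ∈ J, s * c α = b α := by
    intro s
    simp only [hyperplanes, mem_iUnion, mem_setOf_eq, real_inner_smul_left, hc,
      exists_prop]
  have hiff : ∀ s ∈ Icc s₀ s₁, (s • v ∈ hyperplanes u b J ↔ s = s₁) := by
    intro s hsIcc
    have hsS : s ∈ S := hS_eq ▸ hsIcc
    have hspos : 0 < s := lt_of_lt_of_le hs₀pos hsIcc.1
    constructor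
    · intro hmem
      obtain ⟨α, hαJ, heq⟩ := (hmemHyp s).mp hmem
      have hcneg : c α < 0 := by nlinarith [hb α]
      by_contra hne
      have hlt : s < s₁ := lt_of_le_of_ne hsIcc.2 hne
      have h2 := ((hmemS s₁).mp hs₁S).1 α hαJ
      nlinarith
    · rintro rfl
      by_contra hnot
      have hstrict : ∀ α ∈ J, b α < s₁ * c α := by
        intro α hα
        rcases lt_or_eq_of_le (((hmemS s₁).mp hs₁S).1 α hα) with h | h
        · exact h
        · exact absurd ((hmemHyp s₁).mpr ⟨α, hα, h.symm⟩) hnot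
      set U : Set ℝ := ⋂ α ∈ J, {s : ℝ | b α < s * c α} with hUdef
      have hUopen : IsOpen U :=
        (Set.toFinite J).isOpen_biInter fun α _ =>
          isOpen_lt continuous_const (continuous_id.mul continuous_const)
      have hs₁U : s₁ ∈ U := mem_iInter₂.mpr hstrict
      obtain ⟨ε, hε, hball⟩ := Metric.isOpen_iff.mp hUopen s₁ hs₁U
      have hsmem : s₁ + ε / 2 ∈ S := by
        rw [hmemS]
        constructor
        · intro α hα
          have hmemU : s₁ + ε / 2 ∈ U := by
            apply hball
            rw [Metric.mem_ball, Real.dist_eq]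
            rw [abs_of_pos (by linarith)]
            · linarith
          exact le_of_lt (mem_iInter₂.mp hmemU α hα)
        · intro α hα
          have h1 := ((hmemS s₁).mp hs₁S).2 α hα
          have hcneg : c α < 0 := by nlinarith [hb α]
          nlinarith
      have : s₁ + ε / 2 ≤ s₁ := le_csSup hScpt.bddAbove hsmem
      linarith
  refine ⟨s₀, s₁, hs₀pos, hs₀le1, h1les₁, hS_eq, hiff, ?_⟩
  refine ⟨s₁ • v, ⟨⟨hs₁S, (hiff s₁ ⟨by linarith, le_refl _⟩).mpr rfl⟩, s₁, rfl⟩, ?_⟩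
  rintro x ⟨⟨hxP, hxH⟩, s, rfl⟩
  have hsS : s ∈ S := hxP
  have hseq : s = s₁ := (hiff s (hS_eq ▸ hsS)).mp hxH
  rw [hseq]
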